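/- Let F be the field with two elements and let R = F[x, y, zx, zy] be the subring of F[x,y,z] generated over F by x, y, zx, zy. Then in R one has (x)(x)(zy)(zy) = (zx)(zx)(y)(y), the elements x² and y² have no common nonunit factor in R, and the elements x² and z²x² have no common nonunit factor in R; consequently R does not have the Z-property. -/

import Mathlib

/-- An integral domain has the **Z-property** if whenever `a,b,c,d,e` are nonzero
nonunits with `a*b*c = d*e`, then `a*b` and `d` have a common nonunit factor or
`a*b` and `e` have a common nonunit factor. -/
def HasZProperty (R : Type*) [CommRing R] : Prop :=
  ∀ a b c d e : R,
    a ≠ 0 → b ≠ 0 → c ≠ 0 → d ≠ 0 → e ≠ 0 →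
    ¬IsUnit a → ¬IsUnit b → ¬IsUnit c → ¬IsUnit d → ¬IsUnit e →
    a * b * c = d * e →
    (∃ f : R, ¬IsUnit f ∧ f ∣ a * b ∧ f ∣ d) ∨
    (∃ f : R, ¬IsUnit f ∧ f ∣ a * b ∧ f ∣ e)

/-- A domain is **atomic** if every nonzero nonunit is a product of irreducible elements. -/
def IsAtomicDomain (R : Type*) [CommRing R] : Prop :=
  ∀ a : R, a ≠ 0 → ¬IsUnit a →
    ∃ s : Multiset R, (∀ b ∈ s, Irreducible b) ∧ s.prod = a

/-- A **half-factorial domain**: atomic, and any two factorizations of an element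
into irreducibles have the same length. -/
def IsHFD (R : Type*) [CommRing R] : Prop :=
  IsAtomicDomain R ∧
    ∀ s t : Multiset R, (∀ a ∈ s, Irreducible a) → (∀ a ∈ t, Irreducible a) →
      s.prod = t.prod → Multiset.card s = Multiset.card t

open MvPolynomial in
/-- The subring `F[x, y, zx, zy]` of `F[x, y, z]` over the field `F = ℤ/2ℤ` with
two elements, where `x = X 0`, `y = X 1`, `z = X 2`. -/
noncomputable def twoMonomialSubring : Subalgebra (ZMod 2) (MvPolynomial (Fin 3) (ZMod 2)) :=
  Algebra.adjoin (ZMod 2) {X 0, X 1, X 2 * X 0, X 2 * X 1}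

open MvPolynomial in
/-- The element `x` of `F[x, y, zx, zy]`. -/
noncomputable def xF : twoMonomialSubring := ⟨X 0, Algebra.subset_adjoin (by simp)⟩

open MvPolynomial in
/-- The element `y` of `F[x, y, zx, zy]`. -/
noncomputable def yF : twoMonomialSubring := ⟨X 1, Algebra.subset_adjoin (by simp)⟩

open MvPolynomial in
/-- The element `zx` of `F[x, y, zx, zy]`. -/
noncomputable def zxF : twoMonomialSubring := ⟨X 2 * X 0, Algebra.subset_adjoin (by simp)⟩

open MvPolynomial in
/-- The element `zy` of `F[x, y, zx, zy]`. -/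
noncomputable def zyF : twoMonomialSubring := ⟨X 2 * X 1, Algebra.subset_adjoin (by simp)⟩

section Helpers

open MvPolynomial AddMonoidAlgebra

private abbrev P3 := MvPolynomial (Fin 3) (ZMod 2)

private lemma supDeg_monomial (d : Fin 3 →₀ ℕ) {c : ZMod 2} (hc : c ≠ 0) :
    (monomial d c : P3).supDegree (toLex : (Fin 3 →₀ ℕ) → Lex (Fin 3 →₀ ℕ)) = toLex d := by
  rw [AddMonoidAlgebra.supDegree, ← single_eq_monomial, AddMonoidAlgebra.coeff_single,
    Finsupp.support_single_ne_zero _ hc, Finset.sup_singleton]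

private lemma supDeg_mul' {p q : P3} (hp : p ≠ 0) (hq : q ≠ 0) :
    (p * q).supDegree (toLex : (Fin 3 →₀ ℕ) → Lex (Fin 3 →₀ ℕ)) =
      p.supDegree toLex + q.supDegree toLex := by
  have hD : Function.Injective (toLex : (Fin 3 →₀ ℕ) → Lex (Fin 3 →₀ ℕ)) := toLex.injective
  exact supDegree_mul hD (fun a b => by simp [toLex_add])
    (mul_ne_zero (by rwa [Ne, leadingCoeff_eq_zero hD]) (by rwa [Ne, leadingCoeff_eq_zero hD]))
    hp hq

private lemma supDeg_zero_eq_one {p : P3} (hp : p ≠ 0)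
    (h : p.supDegree (toLex : (Fin 3 →₀ ℕ) → Lex (Fin 3 →₀ ℕ)) = 0) :
    p = 1 := by
  have hpc : p = C (p.coeff 0) := by
    ext m
    rcases eq_or_ne m 0 with rfl | hm
    · simp
    · rw [coeff_C, if_neg (Ne.symm hm)]
      by_contra hc
      have h1 : toLex m ≤ p.supDegree toLex := Finset.le_sup (Finsupp.mem_support_iff.mpr hc)
      rw [h] at h1
      have : toLex m = (0 : Lex (Fin 3 →₀ ℕ)) := le_antisymm h1 bot_le
      exact hm (toLex.injective (by simpa using this))
  have hc0 : p.coeff 0 ≠ 0 := fun h0 => hp (by rw [hpc, h0, map_zero])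
  have hall : ∀ c : ZMod 2, c ≠ 0 → c = 1 := by decide
  have hc1 := hall _ hc0
  rw [hpc, hc1, map_one]

private lemma unit_eq_one {p : P3} (h : IsUnit p) : p = 1 := by
  obtain ⟨q, hq⟩ := h.exists_right_inv
  have hp0 : p ≠ 0 := by rintro rfl; simp at hq
  have hq0 : q ≠ 0 := by rintro rfl; simp at hq
  have hsup := supDeg_mul' hp0 hq0
  rw [hq] at hsup
  have h1 : (1 : P3).supDegree (toLex : (Fin 3 →₀ ℕ) → Lex (Fin 3 →₀ ℕ)) = 0 := by
    have := supDeg_monomial (0 : Fin 3 →₀ ℕ) (one_ne_zero (α := ZMod 2))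
    simpa using this
  rw [h1] at hsup
  apply supDeg_zero_eq_one hp0
  have h2 : ofLex (p.supDegree toLex) + ofLex (q.supDegree toLex) = 0 := by
    apply_fun ofLex at hsup
    exact hsup.symm
  have h3 := (add_eq_zero_iff_of_nonneg zero_le zero_le).mp h2
  exact toLex.injective (by simpa using h3.1)

private lemma mon_ne_one {d : Fin 3 →₀ ℕ} (hd : d ≠ 0) : (monomial d 1 : P3) ≠ 1 := by
  intro h
  have := congrArg (MvPolynomial.coeff 0) h
  classical
  rw [coeff_monomial, if_neg hd] at this
  simp at this

private lemma X0_ne_one : (X 0 : P3) ≠ 1 := by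
  rw [← pow_one (X 0 : P3), X_pow_eq_monomial]
  exact mon_ne_one (by simp [Finsupp.single_eq_zero])

private lemma X0_prime : Prime (X 0 : P3) := by
  rw [← UniqueFactorizationMonoid.irreducible_iff_prime]
  constructor
  · exact fun h => X0_ne_one (unit_eq_one h)
  · intro a b hab
    have ha0 : a ≠ 0 := by rintro rfl; exact X_ne_zero (R := ZMod 2) (0 : Fin 3) (by simp at hab)
    have hb0 : b ≠ 0 := by rintro rfl; exact X_ne_zero (R := ZMod 2) (0 : Fin 3) (by simp at hab)
    have hsup : a.supDegree (toLex : (Fin 3 →₀ ℕ) → Lex (Fin 3 →₀ ℕ)) + b.supDegree toLex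
        = toLex (Finsupp.single 0 1) := by
      rw [← supDeg_mul' ha0 hb0, ← hab, ← pow_one (X 0 : P3), X_pow_eq_monomial,
        supDeg_monomial _ one_ne_zero]
    set u := ofLex (a.supDegree toLex) with hu
    set v := ofLex (b.supDegree toLex) with hv
    have huv : u + v = Finsupp.single 0 1 := by
      apply_fun ofLex at hsup; simpa using hsup
    have hj : ∀ j, u j + v j = Finsupp.single (0 : Fin 3) 1 j := fun j => by
      rw [← Finsupp.add_apply, huv]
    have h1 : u 1 = 0 ∧ v 1 = 0 := by
      have := hj 1; simp [Finsupp.single_apply] at this; omega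
    have h2 : u 2 = 0 ∧ v 2 = 0 := by
      have := hj 2; simp [Finsupp.single_apply] at this; omega
    have h0 : u 0 + v 0 = 1 := by
      have := hj 0; simpa [Finsupp.single_apply] using this
    rcases Nat.eq_zero_or_pos (u 0) with hu0 | hu0
    · left
      apply IsUnit.of_mul_eq_one a
      have hueq : u = 0 := by
        ext j
        fin_cases j
        · show u 0 = 0; simpa using hu0
        · simpa using h1.1
        · simpa using h2.1
      have : a = 1 := by
        apply supDeg_zero_eq_one ha0
        show toLex u = (0 : Lex (Fin 3 →₀ ℕ))
        rw [hueq]; rfl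
      rw [this, mul_one]
    · right
      apply IsUnit.of_mul_eq_one b
      have hveq : v = 0 := by
        ext j
        fin_cases j
        · show v 0 = 0; omega
        · simpa using h1.2
        · simpa using h2.2
      have : b = 1 := by
        apply supDeg_zero_eq_one hb0
        show toLex v = (0 : Lex (Fin 3 →₀ ℕ))
        rw [hveq]; rfl
      rw [this, mul_one]

private lemma dvd_Xsq {f : P3} (h : f ∣ X 0 ^ 2) :
    f = 1 ∨ f = X 0 ∨ f = X 0 ^ 2 := by
  obtain ⟨g, hg⟩ := h
  have hp := X0_prime
  have hx0 : (X 0 : P3) ≠ 0 := hp.ne_zero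
  by_cases hxf : (X 0 : P3) ∣ f
  · obtain ⟨f', rfl⟩ := hxf
    have h2 : f' * g = X 0 :=
      mul_left_cancel₀ hx0 (by linear_combination -hg)
    rcases hp.irreducible.isUnit_or_isUnit h2.symm with hu | hu
    · right; left; rw [unit_eq_one hu, mul_one]
    · right; right
      rw [unit_eq_one hu, mul_one] at h2
      rw [h2]; ring
  · have hdg : (X 0 : P3) ∣ g := by
      have hd : (X 0 : P3) ∣ f * g := hg ▸ dvd_pow_self (X 0 : P3) two_ne_zero
      rcases hp.dvd_mul.mp hd with h | h
      · exact absurd h hxf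
      · exact h
    obtain ⟨g', rfl⟩ := hdg
    have h2 : f * g' = X 0 :=
      mul_left_cancel₀ hx0 (by linear_combination -hg)
    rcases hp.irreducible.isUnit_or_isUnit h2.symm with hu | hu
    · left; exact unit_eq_one hu
    · exfalso
      rw [unit_eq_one hu, mul_one] at h2
      exact hxf (h2 ▸ dvd_refl _)

/-- The subalgebra of polynomials all of whose monomials `x^a y^b z^c` satisfy
`c ≤ a + b`. -/
private noncomputable def good : Subalgebra (ZMod 2) P3 where
  carrier := {p | ∀ d ∈ p.support, d 2 ≤ d 0 + d 1}
  add_mem' := by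
    intro a b ha hb d hd
    rcases Finset.mem_union.mp (MvPolynomial.support_add hd) with h | h
    · exact ha d h
    · exact hb d h
  mul_mem' := by
    classical
    intro a b ha hb d hd
    obtain ⟨u, hu, v, hv, rfl⟩ := Finset.mem_add.mp (MvPolynomial.support_mul a b hd)
    have h1 := ha u hu
    have h2 := hb v hv
    simp only [Finsupp.add_apply]
    omega
  algebraMap_mem' := by
    intro c d hd
    have heq : algebraMap (ZMod 2) P3 c = monomial 0 c := by
      rw [MvPolynomial.algebraMap_eq, C_apply]
    rw [heq] at hd
    have hd' : d ∈ ({(0 : Fin 3 →₀ ℕ)} : Finset (Fin 3 →₀ ℕ)) :=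
      MvPolynomial.support_monomial_subset hd
    have : d = 0 := Finset.mem_singleton.mp hd'
    simp [this]

private lemma X_eq_mon (i : Fin 3) : (X i : P3) = monomial (Finsupp.single i 1) 1 := by
  rw [← pow_one (X i : P3), X_pow_eq_monomial]

private lemma XX_eq_mon (i j : Fin 3) :
    (X i * X j : P3) = monomial (Finsupp.single i 1 + Finsupp.single j 1) 1 := by
  rw [X_eq_mon, X_eq_mon, monomial_mul, one_mul]

private lemma adjoin_le_good : twoMonomialSubring ≤ good := by
  apply Algebra.adjoin_le
  intro p hp
  simp only [Set.mem_insert_iff, Set.mem_singleton_iff] at hp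
  have hmon : ∀ (D : Fin 3 →₀ ℕ), D 2 ≤ D 0 + D 1 → (monomial D (1 : ZMod 2) : P3) ∈ good := by
    intro D hD d hd
    have : d = D := Finset.mem_singleton.mp (MvPolynomial.support_monomial_subset hd)
    rwa [this]
  rcases hp with rfl | rfl | rfl | rfl
  · rw [X_eq_mon]; exact hmon _ (by simp [Finsupp.single_apply])
  · rw [X_eq_mon]; exact hmon _ (by simp [Finsupp.single_apply])
  · rw [XX_eq_mon]; exact hmon _ (by simp [Finsupp.single_apply, Finsupp.add_apply])
  · rw [XX_eq_mon]; exact hmon _ (by simp [Finsupp.single_apply, Finsupp.add_apply])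

private lemma not_good_z2x : (X 2 ^ 2 * X 0 : P3) ∉ good := by
  intro hmem
  have heq : (X 2 ^ 2 * X 0 : P3) = monomial (Finsupp.single 2 2 + Finsupp.single 0 1) 1 := by
    rw [X_pow_eq_monomial, X_eq_mon, monomial_mul, one_mul]
  have hd : (Finsupp.single (2 : Fin 3) 2 + Finsupp.single 0 1) ∈ (X 2 ^ 2 * X 0 : P3).support := by
    classical
    rw [heq, MvPolynomial.support_monomial, if_neg (one_ne_zero (α := ZMod 2))]
    exact Finset.mem_singleton_self _
  have := hmem _ hd
  simp [Finsupp.add_apply, Finsupp.single_apply] at this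

private lemma not_good_z2 : (X 2 ^ 2 : P3) ∉ good := by
  intro hmem
  have hd : (Finsupp.single (2 : Fin 3) 2) ∈ (X 2 ^ 2 : P3).support := by
    classical
    rw [X_pow_eq_monomial, MvPolynomial.support_monomial, if_neg (one_ne_zero (α := ZMod 2))]
    exact Finset.mem_singleton_self _
  have := hmem _ hd
  simp [Finsupp.single_apply] at this

private lemma val_ne_one_not_unit {f : twoMonomialSubring} (h : (f : P3) ≠ 1) : ¬IsUnit f :=
  fun hu => h (unit_eq_one (hu.map twoMonomialSubring.val))

end Helpers

open MvPolynomial AddMonoidAlgebra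

/-- In `R = F[x, y, zx, zy]` over the two-element field `F`, one
has `(x)(x)(zy)(zy) = (zx)(zx)(y)(y)`, the pairs `x², y²` and `x², z²x²` each have
no common nonunit factor; consequently `R` does not have the Z-property. -/
theorem twoMonomialSubring_not_zproperty :
    xF * xF * (zyF * zyF) = zxF * zxF * (yF * yF) ∧
    (∀ f : twoMonomialSubring, f ∣ xF ^ 2 → f ∣ yF ^ 2 → IsUnit f) ∧
    (∀ f : twoMonomialSubring, f ∣ xF ^ 2 → f ∣ zxF ^ 2 → IsUnit f) ∧
    ¬ HasZProperty twoMonomialSubring := by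
  have part1 : xF * xF * (zyF * zyF) = zxF * zxF * (yF * yF) := by
    apply Subtype.ext
    show (X 0 * X 0 * (X 2 * X 1 * (X 2 * X 1)) : P3) = X 2 * X 0 * (X 2 * X 0) * (X 1 * X 1)
    ring
  have part2 : ∀ f : twoMonomialSubring, f ∣ xF ^ 2 → f ∣ yF ^ 2 → IsUnit f := by
    intro f h1 h2
    obtain ⟨g, hg⟩ := h1
    have hg' : (X 0 : P3) ^ 2 = f * g := congrArg Subtype.val hg
    obtain ⟨k, hk⟩ := h2
    have hk' : (X 1 : P3) ^ 2 = f * k := congrArg Subtype.val hk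
    rcases dvd_Xsq ⟨g, hg'⟩ with hf | hf | hf
    · have : f = 1 := Subtype.ext hf
      rw [this]; exact isUnit_one
    · exfalso
      have hdvd : (X 0 : P3) ∣ X 1 := by
        apply X0_prime.dvd_of_dvd_pow (n := 2)
        exact ⟨k, by rw [hk', hf]⟩
      rw [X_dvd_X] at hdvd
      exact absurd hdvd (by decide)
    · exfalso
      have hdvd : (X 0 : P3) ∣ X 1 := by
        apply X0_prime.dvd_of_dvd_pow (n := 2)
        exact ⟨X 0 * (k : P3), by rw [hk', hf]; ring⟩
      rw [X_dvd_X] at hdvd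
      exact absurd hdvd (by decide)
  have part3 : ∀ f : twoMonomialSubring, f ∣ xF ^ 2 → f ∣ zxF ^ 2 → IsUnit f := by
    intro f h1 h2
    obtain ⟨g, hg⟩ := h1
    have hg' : (X 0 : P3) ^ 2 = f * g := congrArg Subtype.val hg
    obtain ⟨k, hk⟩ := h2
    have hk' : ((X 2 * X 0 : P3)) ^ 2 = f * k := congrArg Subtype.val hk
    have hx0 : (X 0 : P3) ≠ 0 := X_ne_zero 0
    rcases dvd_Xsq ⟨g, hg'⟩ with hf | hf | hf
    · have : f = 1 := Subtype.ext hf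
      rw [this]; exact isUnit_one
    · exfalso
      have hkeq : (k : P3) = X 2 ^ 2 * X 0 := by
        apply mul_left_cancel₀ hx0
        rw [hf] at hk'
        linear_combination -hk'
      exact not_good_z2x (hkeq ▸ adjoin_le_good k.2)
    · exfalso
      have hkeq : (k : P3) = X 2 ^ 2 := by
        apply mul_left_cancel₀ (pow_ne_zero 2 hx0)
        rw [hf] at hk'
        linear_combination -hk'
      exact not_good_z2 (hkeq ▸ adjoin_le_good k.2)
  refine ⟨part1, part2, part3, ?_⟩
  intro hZ
  have hx0 : (X 0 : P3) ≠ 0 := X_ne_zero 0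
  have hx1 : (X 1 : P3) ≠ 0 := X_ne_zero 1
  have hx2 : (X 2 : P3) ≠ 0 := X_ne_zero 2
  have hxne : xF ≠ 0 := fun h => hx0 (congrArg Subtype.val h)
  have hyne : yF ≠ 0 := fun h => hx1 (congrArg Subtype.val h)
  have hzxne : zxF ≠ 0 := fun h => mul_ne_zero hx2 hx0 (congrArg Subtype.val h)
  have hzyne : zyF ≠ 0 := fun h => mul_ne_zero hx2 hx1 (congrArg Subtype.val h)
  have hxnu : ¬IsUnit xF := val_ne_one_not_unit (by rw [show ((xF : P3)) = X 0 from rfl]; exact X0_ne_one)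
  have hynu : ¬IsUnit yF := val_ne_one_not_unit (by
    show (X 1 : P3) ≠ 1
    rw [X_eq_mon]; exact mon_ne_one (by simp [Finsupp.single_eq_zero]))
  have hzxnu : ¬IsUnit zxF := val_ne_one_not_unit (by
    show (X 2 * X 0 : P3) ≠ 1
    rw [XX_eq_mon]
    refine mon_ne_one fun h => ?_
    have := congrArg (fun w => w 2) h
    simp [Finsupp.add_apply, Finsupp.single_apply] at this)
  have hzynu : ¬IsUnit zyF := val_ne_one_not_unit (by
    show (X 2 * X 1 : P3) ≠ 1
    rw [XX_eq_mon]
    refine mon_ne_one fun h => ?_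
    have := congrArg (fun w => w 2) h
    simp [Finsupp.add_apply, Finsupp.single_apply] at this)
  rcases hZ xF xF (zyF * zyF) (zxF * zxF) (yF * yF) hxne hxne
      (mul_ne_zero hzyne hzyne) (mul_ne_zero hzxne hzxne) (mul_ne_zero hyne hyne)
      hxnu hxnu
      (fun h => hzynu (isUnit_of_mul_isUnit_left h))
      (fun h => hzxnu (isUnit_of_mul_isUnit_left h))
      (fun h => hynu (isUnit_of_mul_isUnit_left h))
      part1 with ⟨f, hfnu, hfab, hfd⟩ | ⟨f, hfnu, hfab, hfe⟩
  · exact hfnu (part3 f (by rwa [← sq] at hfab) (by rwa [← sq] at hfd))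
  · exact hfnu (part2 f (by rwa [← sq] at hfab) (by rwa [← sq] at hfe))
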